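/- Fix r ≥ 2. The map sending an r-core partition λ to its charge vector (c_0, …, c_{r−1}), where c_i is the charge of the residue-i subdiagram m_i(λ) of its Maya diagram, is a bijection from r-core partitions onto the set {(c_0,…,c_{r−1}) ∈ ℤ^r : c_0 + ⋯ + c_{r−1} = 0} (the A_{r−1} root lattice). -/

import Mathlib

/-- Two cells are (edge-)adjacent. -/
def Adj (a b : ℕ × ℕ) : Prop :=
  (a.1 = b.1 ∧ (a.2 + 1 = b.2 ∨ b.2 + 1 = a.2)) ∨
  (a.2 = b.2 ∧ (a.1 + 1 = b.1 ∨ b.1 + 1 = a.1))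

/-- A set of cells is connected (any two cells are joined by a path of
edge-adjacent cells inside the set). -/
def ConnectedCells (s : Set (ℕ × ℕ)) : Prop :=
  ∀ x ∈ s, ∀ y ∈ s, Relation.ReflTransGen (fun a b => Adj a b ∧ a ∈ s ∧ b ∈ s) x y

/-- `ν` is obtained from `μ` by removing a ribbon (rim hook) of length `r`:
the skew shape `μ/ν` has `r` cells, is connected, and contains no 2×2 square. -/
def IsRibbonOf (r : ℕ) (μ ν : YoungDiagram) : Prop :=
  ν.cells ⊆ μ.cells ∧ (μ.cells \ ν.cells).card = r ∧
  ConnectedCells ((μ.cells : Set (ℕ × ℕ)) \ (ν.cells : Set (ℕ × ℕ))) ∧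
  ∀ i j : ℕ, ¬ ((i, j) ∈ μ.cells \ ν.cells ∧ (i + 1, j) ∈ μ.cells \ ν.cells ∧
      (i, j + 1) ∈ μ.cells \ ν.cells ∧ (i + 1, j + 1) ∈ μ.cells \ ν.cells)

/-- An `r`-core is a partition with no removable ribbon of length `r`. -/
def IsRCore (r : ℕ) (μ : YoungDiagram) : Prop := ∀ ν, ¬ IsRibbonOf r μ ν

/-- The beta-set of a partition. -/
def betaSet (μ : YoungDiagram) : Set ℤ :=
  {n | ∃ i : ℕ, n = (μ.rowLen i : ℤ) - (i + 1)}

/-- The charge of the residue-`i` subdiagram of the Maya diagram with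
black-bead set `S`: the number of black beads at positions `i + kr`, `k ≥ 0`,
minus the number of white beads at positions `i + kr`, `k < 0`. -/
noncomputable def charge (r : ℕ) (S : Set ℤ) (i : ℤ) : ℤ :=
  ({k : ℕ | i + (k : ℤ) * r ∈ S}.ncard : ℤ) -
    ({k : ℕ | i - ((k : ℤ) + 1) * r ∉ S}.ncard : ℤ)


/-!
Encode a partition by its beta-set `{λᵢ - i - 1}`. A rim hook of `μ / ν` in rows `a..b` replaces
the beta-numbers `βₐ, …, β_b` of `μ` by `βₐ₊₁, …, β_b, βₐ - r`, so removing an `r`-ribbon is the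
same as moving one bead from `n` to `n - r`. Hence `μ` is an `r`-core iff its beta-set is closed
under `n ↦ n - r`, i.e. on each residue class it is a half-line `{i + kr : k < cᵢ}`, and `cᵢ` is
then the charge. Such a set is determined by `(cᵢ)`. Counting the beads at positions `≥ -Mr` in two
ways (`Mr` of them, since far to the left the beta-set agrees with `ℤ_{<0}`; and `∑ᵢ (cᵢ + M)`
residue by residue) gives `∑ cᵢ = 0`, and conversely any `(cᵢ)` of sum zero defines a set with
exactly `Mr` beads at positions `≥ -Mr`, which is therefore a beta-set.
-/

open Set

theorem Nat.exists_lt_lt_of_notMem_range {α : Type*} [LinearOrder α]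
    {γ : ℕ → α} {x : α} (h0 : x < γ 0) (hx : ∃ i, γ i < x)
    (hxγ : x ∉ range γ) : ∃ b, γ (b + 1) < x ∧ x < γ b := by
  classical
  obtain ⟨b, hb⟩ : ∃ b, Nat.find hx = b + 1 :=
    Nat.exists_eq_add_one.mpr (Nat.pos_of_ne_zero fun h => (Nat.find_spec hx).not_gt (h ▸ h0))
  refine ⟨b, hb ▸ Nat.find_spec hx, lt_of_le_of_ne ?_ fun h => hxγ ⟨b, h.symm⟩⟩
  exact not_lt.mp (Nat.find_min hx (by omega))

theorem Int.exists_eq_Iio_of_sub_one_mem {K : Set ℤ} (hne : K.Nonempty) (hbdd : BddAbove K)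
    (hdown : ∀ k ∈ K, k - 1 ∈ K) : ∃ t, K = Iio t := by
  obtain ⟨m, hm, hmax⟩ := Int.exists_greatest_of_bdd
    (let ⟨B, hB⟩ := hbdd; ⟨B, fun z hz => hB hz⟩) hne
  refine ⟨m + 1, Set.ext fun k => ⟨fun hk => Int.lt_add_one_iff.mpr (hmax k hk), fun hk => ?_⟩⟩
  exact Int.leInductionDown (motive := fun n _ => n ∈ K) hm (fun n _ hn => hdown n hn) k
    (Int.lt_add_one_iff.mp hk)

namespace YoungDiagram

/-- Only meaningful when `f N = 0`: rows from `N` on are discarded. -/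
def ofRowLen (f : ℕ → ℕ) (hf : Antitone f) (N : ℕ) : YoungDiagram where
  cells := (Finset.range N ×ˢ Finset.range (f 0)).filter fun c => c.2 < f c.1
  isLowerSet := by
    rintro ⟨i, j⟩ ⟨i', j'⟩ h hc
    obtain ⟨hi, hj⟩ := Prod.mk_le_mk.mp h
    simp only [Finset.coe_filter, Finset.mem_product, Finset.mem_range, mem_ofPred_eq] at hc ⊢
    have := hf hi
    have := hf (Nat.zero_le i')
    exact ⟨⟨by omega, by omega⟩, by omega⟩

theorem mem_ofRowLen {f : ℕ → ℕ} {hf : Antitone f} {N : ℕ} (hN : f N = 0) {i j : ℕ} :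
    (i, j) ∈ ofRowLen f hf N ↔ j < f i := by
  change (i, j) ∈ (Finset.range N ×ˢ Finset.range (f 0)).filter _ ↔ _
  simp only [Finset.mem_filter, Finset.mem_product, Finset.mem_range, and_iff_right_iff_imp]
  intro hj
  refine ⟨not_le.mp fun hi => ?_, hj.trans_le (hf (Nat.zero_le i))⟩
  have := hf hi
  omega

theorem rowLen_ofRowLen {f : ℕ → ℕ} {hf : Antitone f} {N : ℕ} (hN : f N = 0) (i : ℕ) :
    (ofRowLen f hf N).rowLen i = f i :=
  eq_of_forall_lt_iff fun _ => mem_iff_lt_rowLen.symm.trans (mem_ofRowLen hN)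

theorem rowLen_injective : Function.Injective rowLen := fun μ ν h => by
  ext ⟨i, _⟩
  simp only [mem_cells, mem_iff_lt_rowLen, h]

theorem rowLen_eq_zero_of_colLen_le {μ : YoungDiagram} {i : ℕ} (h : μ.colLen 0 ≤ i) :
    μ.rowLen i = 0 := by
  by_contra h0
  exact (mem_iff_lt_colLen.mp (mem_iff_lt_rowLen.mpr (Nat.pos_of_ne_zero h0))).not_ge h

def betaSeq (μ : YoungDiagram) (i : ℕ) : ℤ := μ.rowLen i - (i + 1)

theorem betaSeq_strictAnti (μ : YoungDiagram) : StrictAnti μ.betaSeq :=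
  strictAnti_nat_of_succ_lt fun i => by
    have := μ.rowLen_anti i (i + 1) i.le_succ
    simp only [betaSeq]
    omega

theorem betaSeq_of_colLen_le (μ : YoungDiagram) {i : ℕ} (h : μ.colLen 0 ≤ i) :
    μ.betaSeq i = -(i + 1) := by
  simp [betaSeq, rowLen_eq_zero_of_colLen_le h]

theorem betaSeq_injective : Function.Injective betaSeq := fun μ ν h =>
  rowLen_injective <| funext fun i => by
    have := congrFun h i
    simp only [betaSeq] at this
    omega

theorem exists_betaSeq_eq {γ : ℕ → ℤ} (hγ : StrictAnti γ) {N : ℕ}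
    (hN : ∀ i, N ≤ i → γ i = -(i + 1)) : ∃ μ : YoungDiagram, μ.betaSeq = γ := by
  have hanti : Antitone fun i => γ i + i :=
    antitone_nat_of_succ_le fun i => by have := hγ (Nat.lt_add_one i); push_cast; omega
  have hnonneg : ∀ i, 0 ≤ γ i + i + 1 := fun i => by
    have h₁ : γ (max i N) + (max i N : ℕ) ≤ γ i + i := hanti (le_max_left i N)
    have := hN _ (le_max_right i N)
    omega
  have hf : Antitone fun i => (γ i + i + 1).toNat := fun i j hij => by
    have : γ j + j ≤ γ i + i := hanti hij
    change (γ j + j + 1).toNat ≤ (γ i + i + 1).toNat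
    omega
  have hfN : (γ N + N + 1).toNat = 0 := by simp [hN N le_rfl]
  refine ⟨ofRowLen _ hf N, funext fun i => ?_⟩
  have := hnonneg i
  rw [betaSeq, rowLen_ofRowLen hfN]
  omega

theorem rowLen_le_of_cells_subset {μ ν : YoungDiagram} (h : ν.cells ⊆ μ.cells) (i : ℕ) :
    ν.rowLen i ≤ μ.rowLen i := by
  by_contra hlt
  have := mem_iff_lt_rowLen.mp <| (mem_cells _).mp <|
    h ((mem_cells _).mpr (mem_iff_lt_rowLen.mpr (not_le.mp hlt)))
  omega

theorem mem_cells_sdiff {μ ν : YoungDiagram} {i j : ℕ} :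
    (i, j) ∈ μ.cells \ ν.cells ↔ ν.rowLen i ≤ j ∧ j < μ.rowLen i := by
  rw [Finset.mem_sdiff, mem_cells, mem_cells, mem_iff_lt_rowLen, mem_iff_lt_rowLen, not_lt,
    and_comm]

theorem card_cells_sdiff {μ ν : YoungDiagram} {s : Finset ℕ}
    (hs : ∀ i ∉ s, ν.rowLen i = μ.rowLen i) :
    (μ.cells \ ν.cells).card = ∑ i ∈ s, (μ.rowLen i - ν.rowLen i) := by
  have hD : μ.cells \ ν.cells =
      s.biUnion fun i => {i} ×ˢ Finset.Ico (ν.rowLen i) (μ.rowLen i) := by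
    ext ⟨i, j⟩
    simp only [mem_cells_sdiff, Finset.mem_biUnion, Finset.mem_product, Finset.mem_singleton,
      Finset.mem_Ico]
    refine ⟨fun hij => ⟨i, ?_, rfl, hij⟩, fun ⟨_, _, hi, hij⟩ => hi ▸ hij⟩
    by_contra hi
    have := hs i hi
    omega
  rw [hD, Finset.card_biUnion]
  · simp
  · intro i _ i' _ hii'
    simp only [Function.onFun, Finset.disjoint_left, Finset.mem_product, Finset.mem_singleton]
    rintro _ ⟨rfl, -⟩ ⟨rfl, -⟩
    exact hii' rfl

end YoungDiagram

theorem betaSet_eq_range (μ : YoungDiagram) : betaSet μ = range μ.betaSeq :=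
  Set.ext fun _ => exists_congr fun _ => eq_comm

theorem betaSet_injective : Function.Injective betaSet := fun μ ν h => by
  rw [betaSet_eq_range, betaSet_eq_range] at h
  refine YoungDiagram.betaSeq_injective <|
    (μ.betaSeq_strictAnti.dual_right.range_inj ν.betaSeq_strictAnti.dual_right).mp ?_
  simpa only [Set.range_comp] using congrArg (OrderDual.toDual '' ·) h

theorem betaSet_bddAbove (μ : YoungDiagram) : BddAbove (betaSet μ) := by
  rw [betaSet_eq_range]
  exact ⟨μ.betaSeq 0, by rintro _ ⟨i, rfl⟩; exact μ.betaSeq_strictAnti.antitone (Nat.zero_le i)⟩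

theorem Iio_subset_betaSet (μ : YoungDiagram) : Iio (-(μ.colLen 0 : ℤ)) ⊆ betaSet μ := by
  intro n (hn : n < _)
  rw [betaSet_eq_range]
  refine ⟨(-n - 1).toNat, ?_⟩
  rw [μ.betaSeq_of_colLen_le (by omega)]
  omega

theorem betaSet_inter_Ici (μ : YoungDiagram) {m : ℕ} (hm : μ.colLen 0 ≤ m) :
    betaSet μ ∩ Ici (-m : ℤ) = ↑((Finset.range m).image μ.betaSeq) := by
  ext n
  simp only [betaSet_eq_range, mem_inter_iff, mem_range, mem_Ici, Finset.coe_image,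
    Finset.coe_range, mem_image, mem_Iio]
  constructor
  · rintro ⟨⟨i, rfl⟩, hi⟩
    refine ⟨i, not_le.mp fun him => ?_, rfl⟩
    rw [μ.betaSeq_of_colLen_le (hm.trans him)] at hi
    omega
  · rintro ⟨i, hi, rfl⟩
    refine ⟨⟨i, rfl⟩, ?_⟩
    simp only [YoungDiagram.betaSeq]
    omega

theorem exists_betaSet_eq (W : Finset ℤ) (N : ℕ) (hW : ∀ w ∈ W, -(N : ℤ) ≤ w)
    (hcard : W.card = N) : ∃ μ : YoungDiagram, betaSet μ = ↑W ∪ Iio (-N : ℤ) := by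
  set e := W.orderEmbOfFin hcard
  set γ : ℕ → ℤ := fun i => if h : i < N then e (Fin.rev ⟨i, h⟩) else -(i + 1) with hγ
  have hγanti : StrictAnti γ := by
    intro i j hij
    simp only [hγ]
    by_cases hj : j < N
    · rw [dif_pos hj, dif_pos (hij.trans hj)]
      exact e.strictMono (Fin.rev_lt_rev.mpr hij)
    · rw [dif_neg hj]
      split_ifs with hi
      · have : -(N : ℤ) ≤ e (Fin.rev ⟨i, hi⟩) := hW _ (W.orderEmbOfFin_mem hcard _)
        omega
      · omega
  obtain ⟨μ, hμ⟩ := YoungDiagram.exists_betaSeq_eq hγanti (N := N) fun i hi => by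
    simp only [hγ, dif_neg (not_lt.mpr hi)]
  refine ⟨μ, Set.ext fun z => ?_⟩
  rw [betaSet_eq_range, hμ, mem_union, Finset.mem_coe, mem_Iio]
  constructor
  · rintro ⟨i, rfl⟩
    simp only [hγ]
    split_ifs with hi
    · exact Or.inl (W.orderEmbOfFin_mem hcard _)
    · right; omega
  · rintro (hz | hz)
    · obtain ⟨x, rfl⟩ : z ∈ range e := by rwa [Finset.range_orderEmbOfFin]
      refine ⟨x.rev, ?_⟩
      simp only [hγ, dif_pos x.rev.isLt, Fin.eta, Fin.rev_rev]
    · refine ⟨(-z - 1).toNat, ?_⟩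
      simp only [hγ, dif_neg (show ¬ (-z - 1).toNat < N by omega)]
      omega

theorem Adj.symm {x y : ℕ × ℕ} (h : Adj x y) : Adj y x := by
  unfold Adj at h ⊢
  omega

def CellPath (s : Set (ℕ × ℕ)) : ℕ × ℕ → ℕ × ℕ → Prop :=
  Relation.ReflTransGen fun a b => Adj a b ∧ a ∈ s ∧ b ∈ s

namespace CellPath

variable {s : Set (ℕ × ℕ)} {x y : ℕ × ℕ}

theorem symm (h : CellPath s x y) : CellPath s y x := by
  induction h with
  | refl => exact Relation.ReflTransGen.refl
  | tail _ hstep ih => exact ih.head ⟨hstep.1.symm, hstep.2.2, hstep.2.1⟩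

theorem trans {z : ℕ × ℕ} (hxy : CellPath s x y) (hyz : CellPath s y z) : CellPath s x z :=
  Relation.ReflTransGen.trans hxy hyz

theorem of_adj (h : Adj x y) (hx : x ∈ s) (hy : y ∈ s) : CellPath s x y :=
  Relation.ReflTransGen.single ⟨h, hx, hy⟩

theorem of_row {i j j' : ℕ} (hjj' : j ≤ j') (h : ∀ k, j ≤ k → k ≤ j' → (i, k) ∈ s) :
    CellPath s (i, j) (i, j') := by
  induction j', hjj' using Nat.le_induction with
  | base => exact Relation.ReflTransGen.refl
  | succ k hk ih =>
    exact (ih fun l hl hlk => h l hl (by omega)).trans <|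
      of_adj (Or.inl ⟨rfl, Or.inl rfl⟩) (h k hk (by omega)) (h (k + 1) (by omega) le_rfl)

theorem exists_vertical (h : CellPath s x y) {i : ℕ} (hxi : x.1 ≤ i) (hiy : i < y.1) :
    ∃ j, (i, j) ∈ s ∧ (i + 1, j) ∈ s := by
  induction h with
  | refl => omega
  | @tail c d _ hstep ih =>
    by_cases hc : i < c.1
    · exact ih hc
    obtain ⟨hadj, hcs, hds⟩ := hstep
    obtain ⟨c1, c2⟩ := c
    obtain ⟨d1, d2⟩ := d
    unfold Adj at hadj
    dsimp only at hadj hc hiy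
    obtain ⟨rfl, rfl, rfl⟩ : i = c1 ∧ d1 = c1 + 1 ∧ d2 = c2 := by omega
    exact ⟨_, hcs, hds⟩

end CellPath

theorem connectedCells_of_forall_cellPath {s : Set (ℕ × ℕ)} (p : ℕ × ℕ)
    (h : ∀ x ∈ s, CellPath s x p) : ConnectedCells s :=
  fun x hx y hy => (h x hx).trans (h y hy).symm

namespace YoungDiagram

/-- `μ / ν` is a rim hook spanning rows `a, …, b`: consecutive rows of it overlap in exactly
one column. -/
structure IsRimHook (μ ν : YoungDiagram) (a b : ℕ) : Prop where
  le : a ≤ b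
  rowLen_eq : ∀ i, i < a ∨ b < i → ν.rowLen i = μ.rowLen i
  rowLen_lt : ∀ i, a ≤ i → i ≤ b → ν.rowLen i < μ.rowLen i
  rowLen_add_one : ∀ i, a ≤ i → i < b → ν.rowLen i + 1 = μ.rowLen (i + 1)

namespace IsRimHook

variable {μ ν : YoungDiagram} {a b : ℕ}

theorem rowLen_le (h : IsRimHook μ ν a b) (i : ℕ) : ν.rowLen i ≤ μ.rowLen i := by
  by_cases hi : a ≤ i ∧ i ≤ b
  · exact (h.rowLen_lt i hi.1 hi.2).le
  · exact (h.rowLen_eq i (by omega)).le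

theorem mem_Icc_of_mem_cells_sdiff (h : IsRimHook μ ν a b) {i j : ℕ}
    (hij : (i, j) ∈ μ.cells \ ν.cells) : a ≤ i ∧ i ≤ b := by
  by_contra hi
  have := h.rowLen_eq i (by omega)
  rw [mem_cells_sdiff] at hij
  omega

theorem card_sdiff (h : IsRimHook μ ν a b) :
    ((μ.cells \ ν.cells).card : ℤ) = μ.betaSeq a - ν.betaSeq b := by
  have hsum := card_cells_sdiff (s := Finset.Ico a (b + 1)) fun i hi =>
    h.rowLen_eq i (by rw [Finset.mem_Ico] at hi; omega)
  have hrow : ∀ i, ((μ.rowLen i - ν.rowLen i : ℕ) : ℤ) = μ.betaSeq i - ν.betaSeq i := fun i => by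
    have := h.rowLen_le i
    simp only [betaSeq]
    omega
  have hshift : ∀ i ∈ Finset.Ico a b, μ.betaSeq i - ν.betaSeq i =
      -μ.betaSeq (i + 1) - -μ.betaSeq i := fun i hi => by
    have := h.rowLen_add_one i (Finset.mem_Ico.mp hi).1 (Finset.mem_Ico.mp hi).2
    simp only [betaSeq]
    omega
  rw [hsum, Nat.cast_sum, Finset.sum_congr rfl fun i _ => hrow i,
    Finset.sum_Ico_succ_top h.le, Finset.sum_congr rfl hshift,
    Finset.sum_Ico_sub (fun i => -μ.betaSeq i) h.le]
  ring

theorem betaSeq_notMem_betaSet (h : IsRimHook μ ν a b) : ν.betaSeq b ∉ betaSet μ := by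
  rintro ⟨j, hj⟩
  have hβ := μ.betaSeq_strictAnti
  have h₁ := h.rowLen_lt b h.le le_rfl
  have h₂ := h.rowLen_eq (b + 1) (by omega)
  have h₃ := ν.rowLen_anti b (b + 1) (by omega)
  have hjb : μ.betaSeq j < μ.betaSeq b := by simp only [betaSeq] at hj ⊢; omega
  have hbj : μ.betaSeq (b + 1) < μ.betaSeq j := by simp only [betaSeq] at hj ⊢; omega
  have := hβ.lt_iff_gt.mp hjb
  have := hβ.lt_iff_gt.mp hbj
  omega

theorem isRibbonOf (h : IsRimHook μ ν a b) : IsRibbonOf (μ.cells \ ν.cells).card μ ν := by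
  refine ⟨fun c hc => ?_, rfl, ?_, ?_⟩
  · obtain ⟨i, j⟩ := c
    rw [mem_cells, mem_iff_lt_rowLen] at hc ⊢
    exact hc.trans_le (h.rowLen_le i)
  · rw [← Finset.coe_sdiff]
    have hmem : ∀ i j, (i, j) ∈ (↑(μ.cells \ ν.cells) : Set (ℕ × ℕ)) ↔
        ν.rowLen i ≤ j ∧ j < μ.rowLen i := fun i j => by rw [Finset.mem_coe, mem_cells_sdiff]
    have hstart : ∀ i, a ≤ i → i ≤ b →
        CellPath (↑(μ.cells \ ν.cells)) (i, ν.rowLen i) (a, ν.rowLen a) := by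
      intro i hai hib
      induction i, hai using Nat.le_induction with
      | base => exact Relation.ReflTransGen.refl
      | succ i hai ih =>
        have hadd := h.rowLen_add_one i hai (by omega)
        have hanti := ν.rowLen_anti i (i + 1) (by omega)
        have hlt := h.rowLen_lt i hai (by omega)
        refine (CellPath.of_row hanti fun k hk hk' => (hmem _ _).mpr ⟨hk, by omega⟩).trans ?_
        exact (CellPath.of_adj (x := (i + 1, ν.rowLen i)) (y := (i, ν.rowLen i))
          (Or.inr ⟨rfl, Or.inr rfl⟩) ((hmem _ _).mpr ⟨hanti, by omega⟩)
          ((hmem _ _).mpr ⟨le_rfl, hlt⟩)).trans (ih (by omega))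
    refine connectedCells_of_forall_cellPath (a, ν.rowLen a) fun ⟨i, j⟩ hij => ?_
    have hi := h.mem_Icc_of_mem_cells_sdiff (Finset.mem_coe.mp hij)
    rw [hmem] at hij
    exact (CellPath.of_row hij.1 fun k hk hkj => (hmem _ _).mpr ⟨hk, by omega⟩).symm.trans
      (hstart i hi.1 hi.2)
  · rintro i j ⟨hij, -, -, hij'⟩
    have hi := h.mem_Icc_of_mem_cells_sdiff hij
    have hi' := h.mem_Icc_of_mem_cells_sdiff hij'
    have := h.rowLen_add_one i hi.1 (by omega)
    rw [mem_cells_sdiff] at hij hij'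
    omega

end IsRimHook

theorem exists_isRimHook {μ : YoungDiagram} {a b m : ℕ} (hab : a ≤ b)
    (hm₁ : μ.rowLen (b + 1) ≤ m) (hm₂ : m < μ.rowLen b) :
    ∃ ν, IsRimHook μ ν a b ∧ ν.rowLen b = m := by
  set f : ℕ → ℕ := fun i =>
    if a ≤ i ∧ i < b then μ.rowLen (i + 1) - 1 else if i = b then m else μ.rowLen i with hf
  have hfanti : Antitone f := antitone_nat_of_succ_le fun i => by
    have := μ.rowLen_anti i (i + 1) (by omega)
    have := μ.rowLen_anti (i + 1) (i + 2) (by omega)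
    simp only [hf]
    split_ifs <;> grind
  have hfN : f (μ.colLen 0 + b + 1) = 0 := by
    simp only [hf]
    rw [if_neg (by omega), if_neg (by omega)]
    exact rowLen_eq_zero_of_colLen_le (by omega)
  refine ⟨ofRowLen f hfanti (μ.colLen 0 + b + 1),
    ⟨hab, fun i hi => ?_, fun i hai hib => ?_, fun i hai hib => ?_⟩, ?_⟩ <;>
    rw [rowLen_ofRowLen hfN] <;> simp only [hf]
  · rw [if_neg (by omega), if_neg (by omega)]
  · rcases hib.lt_or_eq with hib | rfl
    · have := μ.rowLen_anti i (i + 1) (by omega)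
      have := μ.rowLen_anti (i + 1) b hib
      rw [if_pos ⟨hai, hib⟩]
      omega
    · rw [if_neg (by omega), if_pos rfl]
      exact hm₂
  · have := μ.rowLen_anti (i + 1) b hib
    rw [if_pos ⟨hai, hib⟩]
    omega
  · rw [if_neg (by omega), if_pos trivial]

theorem exists_isRimHook_of_sub_notMem {μ : YoungDiagram} {r : ℕ} (hr : 0 < r) {n : ℤ}
    (hn : n ∈ betaSet μ) (hnr : n - r ∉ betaSet μ) :
    ∃ ν a b, IsRimHook μ ν a b ∧ μ.betaSeq a = n ∧ ν.betaSeq b = n - r := by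
  rw [betaSet_eq_range] at hn hnr
  obtain ⟨a, rfl⟩ := hn
  have hβ := μ.betaSeq_strictAnti
  obtain ⟨b, hb₁, hb₂⟩ := Nat.exists_lt_lt_of_notMem_range
    (by have := hβ.antitone (Nat.zero_le a); omega)
    ⟨μ.colLen 0 + (μ.betaSeq a - r).natAbs, by rw [μ.betaSeq_of_colLen_le (by omega)]; omega⟩ hnr
  have hab : a ≤ b := Nat.lt_succ_iff.mp (hβ.lt_iff_gt.mp (hb₁.trans (by omega)))
  simp only [betaSeq] at hb₁ hb₂ ⊢
  obtain ⟨ν, hν, hνb⟩ := exists_isRimHook (μ := μ)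
    (m := (μ.rowLen a - (a + 1) - r + b + 1 : ℤ).toNat) hab (by omega) (by omega)
  exact ⟨ν, a, b, hν, rfl, by omega⟩

theorem _root_.IsRibbonOf.exists_isRimHook {r : ℕ} (hr : 0 < r) {μ ν : YoungDiagram}
    (h : IsRibbonOf r μ ν) : ∃ a b, IsRimHook μ ν a b := by
  obtain ⟨hsub, hcard, hconn, h2x2⟩ := h
  rw [← Finset.coe_sdiff] at hconn
  have hne : (μ.cells \ ν.cells).Nonempty := Finset.card_pos.mp (hcard ▸ hr)
  obtain ⟨⟨a, ja⟩, ha, hamin⟩ := (μ.cells \ ν.cells).exists_min_image Prod.fst hne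
  obtain ⟨⟨b, jb⟩, hb, hbmax⟩ := (μ.cells \ ν.cells).exists_max_image Prod.fst hne
  have hcross (i : ℕ) (hai : a ≤ i) (hib : i < b) :
      ∃ j, (i, j) ∈ μ.cells \ ν.cells ∧ (i + 1, j) ∈ μ.cells \ ν.cells :=
    CellPath.exists_vertical (hconn _ ha _ hb) hai hib
  have hsucc (i : ℕ) (hai : a ≤ i) (hib : i < b) : ν.rowLen i + 1 = μ.rowLen (i + 1) := by
    obtain ⟨j, hj, hj'⟩ := hcross i hai hib
    rw [mem_cells_sdiff] at hj hj'
    have := μ.rowLen_anti i (i + 1) (by omega)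
    have := ν.rowLen_anti i (i + 1) (by omega)
    refine le_antisymm (by omega) (not_lt.mp fun hlt => h2x2 i (ν.rowLen i) ?_)
    simp only [mem_cells_sdiff]
    omega
  refine ⟨a, b, ⟨hamin _ hb, fun i hi => ?_, fun i hai hib => ?_, hsucc⟩⟩
  · by_contra hne
    have hi' : (i, ν.rowLen i) ∈ μ.cells \ ν.cells :=
      mem_cells_sdiff.mpr ⟨le_rfl, lt_of_le_of_ne (rowLen_le_of_cells_subset hsub i) hne⟩
    have := hamin _ hi'
    have := hbmax _ hi'
    omega
  · rcases hib.lt_or_eq with hib | rfl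
    · obtain ⟨j, hj, -⟩ := hcross i hai hib
      rw [mem_cells_sdiff] at hj
      omega
    · rw [mem_cells_sdiff] at hb
      omega

end YoungDiagram

theorem isRCore_iff_sub_mem {r : ℕ} (hr : 0 < r) (μ : YoungDiagram) :
    IsRCore r μ ↔ ∀ n ∈ betaSet μ, n - r ∈ betaSet μ := by
  refine ⟨fun hμ n hn => by_contra fun hnr => ?_, fun hμ ν hν => ?_⟩
  · obtain ⟨ν, a, b, h, rfl, hb⟩ := YoungDiagram.exists_isRimHook_of_sub_notMem hr hn hnr
    have hcard : (μ.cells \ ν.cells).card = r := by have := h.card_sdiff; omega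
    exact hμ ν (hcard ▸ h.isRibbonOf)
  · obtain ⟨a, b, h⟩ := hν.exists_isRimHook hr
    have hcard : ((μ.cells \ ν.cells).card : ℤ) = r := by exact_mod_cast hν.2.1
    have hb : μ.betaSeq a - r = ν.betaSeq b := by have := h.card_sdiff; omega
    exact h.betaSeq_notMem_betaSet (hb ▸ hμ _ ⟨a, rfl⟩)

theorem charge_eq_of_forall_add_mul_mem_iff {r : ℕ} {S : Set ℤ} {i t : ℤ}
    (h : ∀ k : ℤ, i + k * r ∈ S ↔ k < t) : charge r S i = t := by
  have hpos : {k : ℕ | i + (k : ℤ) * r ∈ S} = ↑(Finset.range t.toNat) := by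
    ext k
    simp only [mem_ofPred_eq, Finset.coe_range, mem_Iio, h]
    omega
  have hneg : {k : ℕ | i - ((k : ℤ) + 1) * r ∉ S} = ↑(Finset.range (-t).toNat) := by
    ext k
    simp only [mem_ofPred_eq, Finset.coe_range, mem_Iio, sub_eq_add_neg, ← neg_mul, h]
    omega
  rw [charge, hpos, hneg, ncard_coe_finset, ncard_coe_finset, Finset.card_range,
    Finset.card_range]
  omega

theorem add_mul_mem_iff_lt_charge {r : ℕ} (hr : 0 < r) {S : Set ℤ}
    (hS : ∀ n ∈ S, n - r ∈ S) (hbdd : BddAbove S) {N : ℤ} (hN : Iio N ⊆ S) (i k : ℤ) :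
    i + k * r ∈ S ↔ k < charge r S i := by
  have hr' : (1 : ℤ) ≤ r := by exact_mod_cast hr
  obtain ⟨B, hB⟩ := hbdd
  obtain ⟨t, ht⟩ := Int.exists_eq_Iio_of_sub_one_mem (K := {k | i + k * r ∈ S})
    ⟨-|N| - |i| - 1, hN (by
      have : (-|N| - |i| - 1) * (r : ℤ) ≤ -|N| - |i| - 1 := by
        nlinarith [abs_nonneg N, abs_nonneg i]
      have := le_abs_self i
      have := neg_abs_le N
      simp only [mem_Iio]
      omega)⟩
    ⟨|B - i|, fun k hk => by
      have := hB hk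
      have := le_abs_self (B - i)
      by_contra hlt
      have : k * 1 ≤ k * r := mul_le_mul_of_nonneg_left hr' (by have := abs_nonneg (B - i); omega)
      omega⟩
    (fun k hk => by
      have := hS _ hk
      rwa [show i + k * r - r = i + (k - 1) * r by ring] at this)
  have hmem : ∀ k, i + k * r ∈ S ↔ k < t := fun k => Set.ext_iff.mp ht k
  rw [hmem, charge_eq_of_forall_add_mul_mem_iff hmem]

theorem neg_mul_le_fin_add_mul_iff {r : ℕ} {i : Fin r} {k M : ℤ} :
    -(M * r) ≤ i + k * r ↔ -M ≤ k := by
  have hi : (i : ℤ) < r := by exact_mod_cast i.isLt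
  have hi' : (0 : ℤ) ≤ i := by positivity
  constructor
  · intro h
    by_contra hk
    have : k * r ≤ (-M - 1) * r := by gcongr; omega
    linarith
  · intro hk
    have : -M * r ≤ k * r := by gcongr
    linarith

section Residues

variable {r : ℕ} [NeZero r]

theorem exists_fin_add_mul_eq (z : ℤ) : ∃ (i : Fin r) (k : ℤ), (i : ℤ) + k * r = z :=
  ⟨(Int.divModEquiv r z).2, (Int.divModEquiv r z).1, by
    rw [add_comm, ← Int.divModEquiv_symm_apply, Equiv.symm_apply_apply]⟩

theorem fin_add_mul_inj {i j : Fin r} {k l : ℤ} :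
    (i : ℤ) + k * r = j + l * r ↔ i = j ∧ k = l := by
  refine ⟨fun h => ?_, fun ⟨hij, hkl⟩ => hij ▸ hkl ▸ rfl⟩
  have := (Int.divModEquiv r).symm.injective (a₁ := (k, i)) (a₂ := (l, j)) (by
    simp only [Int.divModEquiv_symm_apply]
    linarith)
  exact ⟨(Prod.ext_iff.mp this).2, (Prod.ext_iff.mp this).1⟩

noncomputable def residueWindow (r : ℕ) (t : Fin r → ℤ) (M : ℤ) : Finset ℤ :=
  (Finset.univ.sigma fun i => Finset.Ico (-M) (t i)).image fun p => (p.1 : ℤ) + p.2 * r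

theorem card_residueWindow {t : Fin r → ℤ} {M : ℤ} (hM : ∀ i, -M ≤ t i) :
    ((residueWindow r t M).card : ℤ) = ∑ i, t i + r * M := by
  rw [residueWindow, Finset.card_image_of_injective, Finset.card_sigma, Nat.cast_sum]
  · simp only [Int.card_Ico]
    rw [Finset.sum_congr rfl fun i _ => show ((t i - -M).toNat : ℤ) = t i + M by
      have := hM i; omega]
    simp [Finset.sum_add_distrib]
  · intro p q h
    obtain ⟨h₁, h₂⟩ := fin_add_mul_inj.mp h
    exact Sigma.ext h₁ (heq_of_eq h₂)

theorem inter_Ici_eq_residueWindow {S : Set ℤ} {t : Fin r → ℤ}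
    (hS : ∀ (i : Fin r) (k : ℤ), (i : ℤ) + k * r ∈ S ↔ k < t i) (M : ℤ) :
    S ∩ Ici (-(M * r)) = ↑(residueWindow r t M) := by
  ext z
  obtain ⟨i, k, rfl⟩ := exists_fin_add_mul_eq (r := r) z
  simp only [residueWindow, mem_inter_iff, hS, mem_Ici, neg_mul_le_fin_add_mul_iff,
    Finset.coe_image, mem_image, Finset.mem_coe, Finset.mem_sigma, Finset.mem_univ, true_and,
    Finset.mem_Ico, Sigma.exists, fin_add_mul_inj]
  constructor
  · rintro ⟨hk, hkM⟩
    exact ⟨i, k, ⟨hkM, hk⟩, rfl, rfl⟩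
  · rintro ⟨j, l, ⟨hlM, hl⟩, rfl, rfl⟩
    exact ⟨hl, hlM⟩

theorem exists_betaSet_eq_of_forall_add_mul_mem_iff {S : Set ℤ} {t : Fin r → ℤ}
    (hS : ∀ (i : Fin r) (k : ℤ), (i : ℤ) + k * r ∈ S ↔ k < t i) (ht : ∑ i, t i = 0) :
    ∃ μ : YoungDiagram, betaSet μ = S := by
  obtain ⟨M₀, hM₀⟩ := Finite.exists_le fun i : Fin r => -t i
  set M := M₀.toNat
  have hM (i : Fin r) : -(M : ℤ) ≤ t i := by have := hM₀ i; omega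
  have hwindow := inter_Ici_eq_residueWindow hS M
  have hcard : (residueWindow r t M).card = M * r := by
    have := card_residueWindow hM
    rw [ht, zero_add, mul_comm] at this
    exact_mod_cast this
  obtain ⟨μ, hμ⟩ := exists_betaSet_eq (residueWindow r t M) (M * r)
    (fun w hw => by
      have : w ∈ S ∩ Ici (-(M * r : ℤ)) := hwindow ▸ hw
      exact_mod_cast this.2)
    hcard
  refine ⟨μ, hμ.trans ?_⟩
  rw [← hwindow]
  ext z
  simp only [mem_union, mem_inter_iff, mem_Ici, mem_Iio]
  push_cast
  refine ⟨fun hz => hz.elim And.left fun hz => ?_, fun hz => ?_⟩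
  · obtain ⟨i, k, rfl⟩ := exists_fin_add_mul_eq (r := r) z
    have := neg_mul_le_fin_add_mul_iff.not.mp hz.not_ge
    exact (hS i k).mpr (by linarith [hM i])
  · by_cases hzM : -(M * r : ℤ) ≤ z
    · exact Or.inl ⟨hz, hzM⟩
    · exact Or.inr (not_le.mp hzM)

end Residues

namespace IsRCore

variable {r : ℕ} {μ : YoungDiagram}

theorem add_mul_mem_betaSet_iff (hr : 0 < r) (hμ : IsRCore r μ) (i k : ℤ) :
    i + k * r ∈ betaSet μ ↔ k < charge r (betaSet μ) i :=
  add_mul_mem_iff_lt_charge hr ((isRCore_iff_sub_mem hr μ).mp hμ) (betaSet_bddAbove μ)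
    (Iio_subset_betaSet μ) i k

theorem sum_charge_eq_zero (hr : 0 < r) (hμ : IsRCore r μ) :
    ∑ i : Fin r, charge r (betaSet μ) i = 0 := by
  have : NeZero r := ⟨hr.ne'⟩
  obtain ⟨M₀, hM₀⟩ := Finite.exists_le fun i : Fin r => -charge r (betaSet μ) i
  set M := max M₀.toNat (μ.colLen 0)
  have hM (i : Fin r) : -(M : ℤ) ≤ charge r (betaSet μ) i := by have := hM₀ i; omega
  have hwindow := (betaSet_inter_Ici μ (m := M * r) (le_max_right _ _ |>.trans
    (Nat.le_mul_of_pos_right M hr))).symm.trans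
    (by push_cast; exact inter_Ici_eq_residueWindow (hμ.add_mul_mem_betaSet_iff hr ·) M)
  have hcard := congrArg Finset.card (Finset.coe_injective hwindow)
  rw [Finset.card_image_of_injective _ μ.betaSeq_strictAnti.injective, Finset.card_range] at hcard
  have := card_residueWindow hM
  rw [← hcard] at this
  push_cast at this
  linarith

theorem eq_of_charge_eq (hr : 0 < r) (hμ : IsRCore r μ) {ν : YoungDiagram} (hν : IsRCore r ν)
    (h : ∀ i : Fin r, charge r (betaSet μ) i = charge r (betaSet ν) i) : μ = ν := by
  have : NeZero r := ⟨hr.ne'⟩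
  refine betaSet_injective (Set.ext fun z => ?_)
  obtain ⟨i, k, rfl⟩ := exists_fin_add_mul_eq (r := r) z
  rw [hμ.add_mul_mem_betaSet_iff hr, hν.add_mul_mem_betaSet_iff hr, h i]

end IsRCore

theorem exists_isRCore_charge_eq {r : ℕ} (hr : 0 < r) (v : Fin r → ℤ) (hv : ∑ i, v i = 0) :
    ∃ μ, IsRCore r μ ∧ ∀ i : Fin r, charge r (betaSet μ) i = v i := by
  have : NeZero r := ⟨hr.ne'⟩
  set S : Set ℤ := {z | ∃ (i : Fin r) (k : ℤ), (i : ℤ) + k * r = z ∧ k < v i}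
  have hS (i : Fin r) (k : ℤ) : (i : ℤ) + k * r ∈ S ↔ k < v i :=
    ⟨fun ⟨j, l, h, hl⟩ => by obtain ⟨rfl, rfl⟩ := fin_add_mul_inj.mp h; exact hl,
      fun hk => ⟨i, k, rfl, hk⟩⟩
  obtain ⟨μ, hμS⟩ := exists_betaSet_eq_of_forall_add_mul_mem_iff hS hv
  refine ⟨μ, (isRCore_iff_sub_mem hr μ).mpr ?_, fun i => ?_⟩
  · rw [hμS]
    rintro _ ⟨i, k, rfl, hk⟩
    exact ⟨i, k - 1, by ring, by omega⟩
  · rw [hμS]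
    exact charge_eq_of_forall_add_mul_mem_iff (hS i)

/-- The map sending an `r`-core to its charge vector is a bijection onto the
`A_{r-1}` root lattice `{(c_0, …, c_{r-1}) ∈ ℤ^r : Σ c_i = 0}`. -/
theorem rcore_charge_bijection (r : ℕ) (hr : 2 ≤ r) :
    Set.BijOn (fun (μ : YoungDiagram) (i : Fin r) => charge r (betaSet μ) i)
      {μ | IsRCore r μ}
      {v : Fin r → ℤ | ∑ i, v i = 0} := by
  have hr₀ : 0 < r := by omega
  refine ⟨fun μ hμ => IsRCore.sum_charge_eq_zero hr₀ hμ,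
    fun μ hμ ν hν h => IsRCore.eq_of_charge_eq hr₀ hμ hν (congrFun h), fun v hv => ?_⟩
  obtain ⟨μ, hμ, hμv⟩ := exists_isRCore_charge_eq hr₀ v hv
  exact ⟨μ, hμ, funext hμv⟩
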